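/- Let T be a leafless, infinite, locally finite rooted tree on which the backward shift B is bounded on H^p_0(T). Then B is hypercyclic on H^p_0(T) if and only if γ(n) → ∞ as n → ∞. -/

import Mathlib

open scoped BigOperators
open Classical

/-- An infinite, locally finite rooted tree, presented combinatorially via a
parent function and a level (distance-to-root) function.  Every level is a
finite nonempty set of vertices. -/
structure HTree where
  V : Type
  root : V
  parent : V → V
  level : V → ℕ
  level_root : level root = 0
  root_of_level_zero : ∀ v, level v = 0 → v = root
  level_parent : ∀ v, v ≠ root → level (parent v) + 1 = level v
  finite_level : ∀ n : ℕ, {v : V | level v = n}.Finite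
  nonempty_level : ∀ n : ℕ, {v : V | level v = n}.Nonempty

namespace HTree

variable (T : HTree)

/-- The finite set of vertices at level `n`. -/
noncomputable def levelFinset (n : ℕ) : Finset T.V := (T.finite_level n).toFinset

/-- `γ(n)`, the number of vertices at level `n`. -/
noncomputable def gamma (n : ℕ) : ℕ := (T.levelFinset n).card

/-- The set of `m`-children of a vertex `v`. -/
noncomputable def nChildrenFinset (m : ℕ) (v : T.V) : Finset T.V :=
  (T.levelFinset (T.level v + m)).filter (fun w => T.parent^[m] w = v)

/-- `γ(m,v)`, the number of `m`-children of `v`. -/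
noncomputable def numNChildren (m : ℕ) (v : T.V) : ℕ := (T.nChildrenFinset m v).card

/-- The set of children of a vertex. -/
noncomputable def childrenFinset (v : T.V) : Finset T.V := T.nChildrenFinset 1 v

/-- `γ(1,v)`, the number of children of `v`. -/
noncomputable def numChildren (v : T.V) : ℕ := T.numNChildren 1 v

/-- `K(m,r)`, the maximal number of `m`-children among vertices at level `r`. -/
noncomputable def K (m r : ℕ) : ℕ := (T.levelFinset r).sup (fun v => T.numNChildren m v)

/-- `M_p^p(n,f)`, the `p`-th power of the `p`-th mean of `|f|` over level `n`. -/
noncomputable def Mpp (p : ℝ) (f : T.V → ℂ) (n : ℕ) : ℝ :=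
  (1 / (T.gamma n : ℝ)) * ∑ v ∈ T.levelFinset n, ‖f v‖ ^ p

/-- `M_p(n,f)`, the `p`-th mean of `|f|` over level `n`. -/
noncomputable def Mp (p : ℝ) (f : T.V → ℂ) (n : ℕ) : ℝ := (T.Mpp p f n) ^ (1 / p)

/-- Membership in the Hardy space `H^p(T)`. -/
def MemHp (p : ℝ) (f : T.V → ℂ) : Prop := ∃ C : ℝ, ∀ n : ℕ, T.Mp p f n ≤ C

/-- Membership in the little Hardy space `H^p_0(T)`. -/
def MemHp0 (p : ℝ) (f : T.V → ℂ) : Prop :=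
  Filter.Tendsto (T.Mp p f) Filter.atTop (nhds 0)

/-- The `H^p` norm, `sup_n M_p(n,f)`. -/
noncomputable def Hnorm (p : ℝ) (f : T.V → ℂ) : ℝ := ⨆ n : ℕ, T.Mp p f n

/-- The forward shift `(Sf)(v) = f(parent v)`, `(Sf)(root) = 0`. -/
noncomputable def S (f : T.V → ℂ) : T.V → ℂ := fun v => if v = T.root then 0 else f (T.parent v)

/-- The backward shift `(Bf)(v) = Σ_{w child of v} f(w)`. -/
noncomputable def B (f : T.V → ℂ) : T.V → ℂ := fun v => ∑ w ∈ T.childrenFinset v, f w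

/-- An operator `A` is bounded on the subspace described by `Mem`, with the
`H^p` norm. -/
def BoundedOn (A : (T.V → ℂ) → (T.V → ℂ)) (Mem : (T.V → ℂ) → Prop) (p : ℝ) : Prop :=
  ∃ C : ℝ, 0 ≤ C ∧ ∀ f, Mem f → Mem (A f) ∧ T.Hnorm p (A f) ≤ C * T.Hnorm p f

/-- The operator norm of `A` on the subspace described by `Mem`. -/
noncomputable def opNorm (A : (T.V → ℂ) → (T.V → ℂ)) (Mem : (T.V → ℂ) → Prop) (p : ℝ) : ℝ :=
  sInf {C : ℝ | 0 ≤ C ∧ ∀ f, Mem f → Mem (A f) ∧ T.Hnorm p (A f) ≤ C * T.Hnorm p f}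

/-- Hypercyclicity of an operator `A` on the subspace described by `Mem`. -/
def Hypercyclic (A : (T.V → ℂ) → (T.V → ℂ)) (Mem : (T.V → ℂ) → Prop) (p : ℝ) : Prop :=
  ∃ f, Mem f ∧ ∀ g, Mem g → ∀ ε : ℝ, 0 < ε →
    ∃ N : ℕ, T.Hnorm p (fun v => A^[N] f v - g v) < ε

end HTree

/-!
If `γ` stays bounded, `B^N f (root)` is a sum of at most `γ(N)` values of `f`, each at most
`γ(N)^(1/p) M_p(N,f)`, so every orbit is bounded at the root and cannot approach a large multiple
of the indicator of the root.

Conversely, `T_b` spreads `g` evenly over descendants, which gives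
`M_p(r, B^a T_b g)^p ≤ ‖g‖_p^p / γ(b - a)` for finitely supported `g`; this tends to `0`
when `γ → ∞`. Enumerate a countable dense family `g_k` of finitely supported functions, each
repeated infinitely often, and let `n_k` grow fast enough. Then `f = Σ_k T_{n_k} g_k` lies in
`H^p_0(T)` and `B^{n_k} f` is within `2^{-k}` of `g_k`.
-/

lemma Finset.sum_range_eq_add_sum_Ico {M : Type*} [AddCommMonoid M] {F : ℕ → M} {k R : ℕ}
    (hkR : k < R) (hF : ∀ i < k, F i = 0) :
    ∑ i ∈ Finset.range R, F i = F k + ∑ i ∈ Finset.Ico (k + 1) R, F i := by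
  rw [Finset.range_eq_Ico, ← Finset.sum_Ico_consecutive _ (Nat.zero_le k) hkR.le,
    Finset.sum_eq_zero fun i hi => hF i (Finset.mem_Ico.1 hi).2, zero_add,
    Finset.sum_eq_sum_Ico_succ_bot hkR]

lemma exists_seq_gaps (M d : ℕ → ℕ) :
    ∃ n : ℕ → ℕ, (∀ k, M k ≤ n k) ∧
      ∀ j k, j < k → n j + d j < n k ∧ n j + M k ≤ n k := by
  refine ⟨fun k => ∑ i ∈ Finset.range (k + 1), (M i + ∑ l ∈ Finset.range i, d l + 1),
    fun k => ?_, fun j k hjk => ?_⟩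
  · dsimp only
    rw [Finset.sum_range_succ]
    omega
  · have hn : ∑ i ∈ Finset.range (j + 1), (M i + ∑ l ∈ Finset.range i, d l + 1)
        ≤ ∑ i ∈ Finset.range k, (M i + ∑ l ∈ Finset.range i, d l + 1) :=
      Finset.sum_le_sum_of_subset (Finset.range_subset_range.2 hjk)
    have hd : d j ≤ ∑ l ∈ Finset.range k, d l :=
      Finset.single_le_sum (fun _ _ => Nat.zero_le _) (Finset.mem_range.2 hjk)
    dsimp only
    rw [Finset.sum_range_succ _ k]
    omega

namespace HTree

variable {T : HTree} {p : ℝ}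

lemma mem_levelFinset {v : T.V} {n : ℕ} : v ∈ T.levelFinset n ↔ T.level v = n := by
  simp [levelFinset]

lemma gamma_pos (n : ℕ) : 0 < T.gamma n := by
  obtain ⟨v, hv⟩ := T.nonempty_level n
  exact Finset.card_pos.2 ⟨v, mem_levelFinset.2 hv⟩

lemma levelFinset_zero : T.levelFinset 0 = {T.root} := by
  ext v
  rw [mem_levelFinset, Finset.mem_singleton]
  exact ⟨T.root_of_level_zero v, fun h => h ▸ T.level_root⟩

lemma level_parent_iterate {v : T.V} {n m : ℕ} (h : T.level v = n + m) :
    T.level (T.parent^[m] v) = n := by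
  induction m generalizing v with
  | zero => simpa using h
  | succ m ih =>
    have hv : v ≠ T.root := fun hv => by rw [hv, T.level_root] at h; omega
    have := T.level_parent v hv
    exact ih (by omega)

lemma mem_nChildrenFinset {m : ℕ} {u v : T.V} :
    v ∈ T.nChildrenFinset m u ↔ T.level v = T.level u + m ∧ T.parent^[m] v = u := by
  simp [nChildrenFinset, mem_levelFinset]

lemma nChildrenFinset_subset_levelFinset (m : ℕ) (u : T.V) :
    T.nChildrenFinset m u ⊆ T.levelFinset (T.level u + m) :=
  Finset.filter_subset _ _

lemma nChildrenFinset_zero (u : T.V) : T.nChildrenFinset 0 u = {u} := by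
  ext v
  rw [mem_nChildrenFinset, Finset.mem_singleton]
  exact ⟨And.right, fun h => h ▸ ⟨rfl, rfl⟩⟩

lemma sum_levelFinset_add {M : Type*} [AddCommMonoid M] (n m : ℕ) (F : T.V → M) :
    ∑ v ∈ T.levelFinset (n + m), F v
      = ∑ u ∈ T.levelFinset n, ∑ v ∈ T.nChildrenFinset m u, F v := by
  refine (Finset.sum_fiberwise_of_maps_to (fun v hv => mem_levelFinset.2
    (level_parent_iterate (mem_levelFinset.1 hv))) F).symm.trans ?_
  refine Finset.sum_congr rfl fun u hu => ?_
  rw [nChildrenFinset, mem_levelFinset.1 hu]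

lemma nChildrenFinset_add (m a : ℕ) (u : T.V) :
    T.nChildrenFinset (m + a) u = (T.nChildrenFinset m u).biUnion (T.nChildrenFinset a) := by
  ext w
  simp only [Finset.mem_biUnion, mem_nChildrenFinset, Function.iterate_add_apply]
  constructor
  · rintro ⟨hw, hu⟩
    have : T.level (T.parent^[a] w) = T.level u + m := level_parent_iterate (by omega)
    exact ⟨T.parent^[a] w, ⟨this, hu⟩, by omega, rfl⟩
  · rintro ⟨v, ⟨hv, rfl⟩, hw, rfl⟩
    exact ⟨by omega, rfl⟩

lemma pairwiseDisjoint_nChildrenFinset (m a : ℕ) (u : T.V) :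
    (T.nChildrenFinset m u : Set T.V).PairwiseDisjoint (T.nChildrenFinset a) := by
  intro x _ y _ hxy
  refine Finset.disjoint_left.2 fun w hwx hwy => hxy ?_
  rw [← (mem_nChildrenFinset.1 hwx).2, (mem_nChildrenFinset.1 hwy).2]

lemma numNChildren_add (m a : ℕ) (u : T.V) :
    T.numNChildren (m + a) u = ∑ v ∈ T.nChildrenFinset m u, T.numNChildren a v := by
  rw [numNChildren, nChildrenFinset_add,
    Finset.card_biUnion (pairwiseDisjoint_nChildrenFinset m a u)]
  rfl

lemma B_iterate_apply (a : ℕ) (f : T.V → ℂ) (v : T.V) :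
    T.B^[a] f v = ∑ w ∈ T.nChildrenFinset a v, f w := by
  induction a generalizing f with
  | zero => simp [nChildrenFinset_zero]
  | succ a ih =>
    rw [Function.iterate_succ_apply, ih, nChildrenFinset_add,
      Finset.sum_biUnion (pairwiseDisjoint_nChildrenFinset a 1 v)]
    rfl

lemma B_iterate_apply_eq_zero {a : ℕ} {f : T.V → ℂ} {v : T.V}
    (hf : ∀ w, T.level w = T.level v + a → f w = 0) : T.B^[a] f v = 0 := by
  rw [B_iterate_apply]
  exact Finset.sum_eq_zero fun w hw => hf w (mem_nChildrenFinset.1 hw).1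

lemma gamma_add (n m : ℕ) : T.gamma (n + m) = ∑ u ∈ T.levelFinset n, T.numNChildren m u := by
  simp only [gamma, numNChildren, Finset.card_eq_sum_ones]
  exact T.sum_levelFinset_add n m _

lemma numNChildren_pos (hleaf : ∀ v : T.V, T.numChildren v ≠ 0) (m : ℕ) (u : T.V) :
    0 < T.numNChildren m u := by
  induction m generalizing u with
  | zero => simp [numNChildren, nChildrenFinset_zero]
  | succ m ih =>
    rw [numNChildren_add]
    obtain ⟨v, hv⟩ := Finset.card_pos.1 (ih u)
    exact Finset.sum_pos' (fun _ _ => Nat.zero_le _) ⟨v, hv, Nat.pos_of_ne_zero (hleaf v)⟩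

lemma gamma_mono (hleaf : ∀ v : T.V, T.numChildren v ≠ 0) : Monotone T.gamma := by
  refine monotone_nat_of_le_succ fun n => ?_
  rw [gamma_add, gamma, Finset.card_eq_sum_ones]
  exact Finset.sum_le_sum fun u _ => numNChildren_pos hleaf 1 u

lemma Mpp_nonneg (f : T.V → ℂ) (n : ℕ) : 0 ≤ T.Mpp p f n := by
  unfold Mpp; positivity

lemma Mp_nonneg (f : T.V → ℂ) (n : ℕ) : 0 ≤ T.Mp p f n :=
  Real.rpow_nonneg (Mpp_nonneg f n) _

lemma gamma_mul_Mpp (f : T.V → ℂ) (n : ℕ) :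
    T.gamma n * T.Mpp p f n = ∑ v ∈ T.levelFinset n, ‖f v‖ ^ p := by
  have : (T.gamma n : ℝ) ≠ 0 := Nat.cast_ne_zero.2 (gamma_pos n).ne'
  rw [Mpp, ← mul_assoc, mul_one_div_cancel this, one_mul]

lemma Mp_congr {f g : T.V → ℂ} {n : ℕ} (h : ∀ v, T.level v = n → f v = g v) :
    T.Mp p f n = T.Mp p g n := by
  unfold Mp Mpp
  congr 2
  exact Finset.sum_congr rfl fun v hv => by rw [h v (mem_levelFinset.1 hv)]

lemma Mpp_eq_zero (hp : p ≠ 0) {f : T.V → ℂ} {n : ℕ}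
    (h : ∀ v, T.level v = n → f v = 0) :
    T.Mpp p f n = 0 := by
  rw [Mpp, Finset.sum_eq_zero fun v hv => by
    rw [h v (mem_levelFinset.1 hv), norm_zero, Real.zero_rpow hp], mul_zero]

lemma Mp_level_zero (hp : p ≠ 0) (f : T.V → ℂ) : T.Mp p f 0 = ‖f T.root‖ := by
  rw [Mp, Mpp, gamma, levelFinset_zero, Finset.sum_singleton, Finset.card_singleton,
    Nat.cast_one, div_one, one_mul, one_div, Real.rpow_rpow_inv (norm_nonneg _) hp]

lemma Mp_le_of_forall_norm_le (hp : 0 < p) {f : T.V → ℂ} {n : ℕ} {ε : ℝ} (hε : 0 ≤ ε)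
    (h : ∀ v, T.level v = n → ‖f v‖ ≤ ε) : T.Mp p f n ≤ ε := by
  have hγ : (0 : ℝ) < T.gamma n := Nat.cast_pos.2 (gamma_pos n)
  have hsum : ∑ v ∈ T.levelFinset n, ‖f v‖ ^ p ≤ T.gamma n * ε ^ p := by
    rw [gamma, ← nsmul_eq_mul]
    exact Finset.sum_le_card_nsmul _ _ _ fun v hv =>
      Real.rpow_le_rpow (norm_nonneg _) (h v (mem_levelFinset.1 hv)) hp.le
  have hMpp : T.Mpp p f n ≤ ε ^ p := by
    rw [← gamma_mul_Mpp] at hsum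
    exact le_of_mul_le_mul_left hsum hγ
  calc T.Mp p f n ≤ (ε ^ p) ^ (1 / p) :=
        Real.rpow_le_rpow (Mpp_nonneg f n) hMpp (by positivity)
    _ = ε := by rw [one_div, Real.rpow_rpow_inv hε hp.ne']

lemma Mp_zero (hp : 0 < p) (n : ℕ) : T.Mp p 0 n = 0 :=
  le_antisymm (Mp_le_of_forall_norm_le hp le_rfl fun v _ => by simp) (Mp_nonneg 0 n)

lemma norm_le_Mp (hp : 0 < p) (f : T.V → ℂ) {w : T.V} :
    ‖f w‖ ≤ (T.gamma (T.level w) : ℝ) ^ (1 / p) * T.Mp p f (T.level w) := by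
  have hw : ‖f w‖ ^ p ≤ T.gamma (T.level w) * T.Mpp p f (T.level w) := by
    rw [gamma_mul_Mpp]
    exact Finset.single_le_sum (f := fun v => ‖f v‖ ^ p) (fun v _ => by positivity)
      (mem_levelFinset.2 rfl)
  calc ‖f w‖ = (‖f w‖ ^ p) ^ (1 / p) := by
        rw [one_div, Real.rpow_rpow_inv (norm_nonneg _) hp.ne']
    _ ≤ _ := Real.rpow_le_rpow (by positivity) hw (by positivity)
    _ = _ := Real.mul_rpow (Nat.cast_nonneg _) (Mpp_nonneg f _)

lemma Mp_add_le (hp : 1 ≤ p) (f g : T.V → ℂ) (n : ℕ) :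
    T.Mp p (f + g) n ≤ T.Mp p f n + T.Mp p g n := by
  have hc : (0 : ℝ) ≤ 1 / (T.gamma n : ℝ) := by positivity
  have hsum : ∀ h : T.V → ℂ, 0 ≤ ∑ v ∈ T.levelFinset n, ‖h v‖ ^ p := fun _ => by positivity
  unfold Mp Mpp
  rw [Real.mul_rpow hc (hsum _), Real.mul_rpow hc (hsum _), Real.mul_rpow hc (hsum _),
    ← mul_add]
  refine mul_le_mul_of_nonneg_left ?_ (by positivity)
  calc (∑ v ∈ T.levelFinset n, ‖(f + g) v‖ ^ p) ^ (1 / p)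
      ≤ (∑ v ∈ T.levelFinset n, (‖f v‖ + ‖g v‖) ^ p) ^ (1 / p) := by
        gcongr with v; exact norm_add_le _ _
    _ ≤ _ := Real.Lp_add_le_of_nonneg _ hp (fun _ _ => norm_nonneg _) (fun _ _ => norm_nonneg _)

lemma Mp_sum_le (hp : 1 ≤ p) {ι : Type*} (s : Finset ι) (F : ι → T.V → ℂ) (n : ℕ) :
    T.Mp p (∑ i ∈ s, F i) n ≤ ∑ i ∈ s, T.Mp p (F i) n :=
  Finset.le_sum_of_subadditive (fun f => T.Mp p f n) (Mp_zero (by linarith) n).le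
    (fun f g => Mp_add_le hp f g n) s F

lemma Mp_le_Mp_sub_add (hp : 1 ≤ p) (f g : T.V → ℂ) (n : ℕ) :
    T.Mp p f n ≤ T.Mp p (f - g) n + T.Mp p g n := by
  simpa using Mp_add_le hp (f - g) g n

lemma Mp_sub_le_add (hp : 1 ≤ p) (f g h : T.V → ℂ) (n : ℕ) :
    T.Mp p (f - h) n ≤ T.Mp p (f - g) n + T.Mp p (g - h) n := by
  simpa using Mp_add_le hp (f - g) (g - h) n

variable (T) in
def VanishesAbove (d : ℕ) (g : T.V → ℂ) : Prop := ∀ v, d < T.level v → g v = 0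

lemma memHp0_of_vanishesAbove (hp : 0 < p) {d : ℕ} {g : T.V → ℂ} (hg : T.VanishesAbove d g) :
    T.MemHp0 p g := by
  refine tendsto_const_nhds.congr' (Filter.eventually_atTop.2 ⟨d + 1, fun n hn => ?_⟩)
  rw [← Mp_zero hp n]
  exact Mp_congr fun v hv => (hg v (by omega)).symm

lemma exists_sum_norm_rpow_le (hp : 0 < p) {d : ℕ} {g : T.V → ℂ} (hg : T.VanishesAbove d g) :
    ∃ C, ∀ n, ∑ v ∈ T.levelFinset n, ‖g v‖ ^ p ≤ C := by
  refine ⟨∑ j ∈ Finset.range (d + 1), ∑ v ∈ T.levelFinset j, ‖g v‖ ^ p, fun n => ?_⟩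
  by_cases hn : n ≤ d
  · exact Finset.single_le_sum (f := fun j => ∑ v ∈ T.levelFinset j, ‖g v‖ ^ p)
      (fun j _ => by positivity) (Finset.mem_range.2 (by omega))
  · calc ∑ v ∈ T.levelFinset n, ‖g v‖ ^ p = 0 := Finset.sum_eq_zero fun v hv => by
          rw [hg v (by rw [mem_levelFinset.1 hv]; omega), norm_zero, Real.zero_rpow hp.ne']
      _ ≤ _ := by positivity

variable (T) in
/-- The right inverse `T_b` of `B^b`: it spreads `g u` evenly over the `b`-children of `u`. -/
noncomputable def spread (b : ℕ) (g : T.V → ℂ) : T.V → ℂ := fun v =>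
  if b ≤ T.level v then g (T.parent^[b] v) / T.numNChildren b (T.parent^[b] v) else 0

lemma spread_eq_zero_of_lt {b : ℕ} {g : T.V → ℂ} {v : T.V} (h : T.level v < b) :
    T.spread b g v = 0 := by
  rw [spread, if_neg (by omega)]

lemma spread_eq_zero_of_vanishesAbove {b d : ℕ} {g : T.V → ℂ} (hg : T.VanishesAbove d g)
    {v : T.V} (h : b + d < T.level v) : T.spread b g v = 0 := by
  have : T.level (T.parent^[b] v) = T.level v - b := level_parent_iterate (by omega)
  rw [spread, if_pos (by omega), hg _ (by omega), zero_div]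

lemma B_iterate_spread_of_mem {m a : ℕ} {u v : T.V} (hv : v ∈ T.nChildrenFinset m u)
    (g : T.V → ℂ) :
    T.B^[a] (T.spread (m + a) g) v = T.numNChildren a v * (g u / T.numNChildren (m + a) u) := by
  obtain ⟨hvl, rfl⟩ := mem_nChildrenFinset.1 hv
  rw [B_iterate_apply, numNChildren, ← nsmul_eq_mul]
  refine Finset.sum_eq_card_nsmul fun w hw => ?_
  obtain ⟨hwl, rfl⟩ := mem_nChildrenFinset.1 hw
  rw [spread, if_pos (by omega), Function.iterate_add_apply]

lemma B_iterate_spread (hleaf : ∀ v : T.V, T.numChildren v ≠ 0) (b : ℕ) (g : T.V → ℂ) :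
    T.B^[b] (T.spread b g) = g := by
  ext v
  have := B_iterate_spread_of_mem (m := 0) (a := b) (u := v) (v := v)
    (by simp [nChildrenFinset_zero]) g
  rw [zero_add] at this
  rw [this, mul_div_cancel₀]
  exact Nat.cast_ne_zero.2 (numNChildren_pos hleaf b v).ne'

/-- Each `u` at level `s` spreads `|g u|` over its `m`-children `v` with weights
`x v = γ(a,v) / γ(m+a,u)` summing to at most one, and `x ^ p ≤ x` on `[0,1]`. -/
lemma sum_norm_B_iterate_spread_rpow_le (hp : 1 ≤ p) (s m a : ℕ) (g : T.V → ℂ) :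
    ∑ v ∈ T.levelFinset (s + m), ‖T.B^[a] (T.spread (m + a) g) v‖ ^ p
      ≤ ∑ u ∈ T.levelFinset s, ‖g u‖ ^ p := by
  rw [sum_levelFinset_add]
  refine Finset.sum_le_sum fun u _ => ?_
  set x : T.V → ℝ := fun v => (T.numNChildren a v : ℝ) / T.numNChildren (m + a) u
  have hx : ∀ v ∈ T.nChildrenFinset m u, x v ≤ 1 := fun v hv =>
    div_le_one_of_le₀ (Nat.cast_le.2 (numNChildren_add m a u ▸
      Finset.single_le_sum (fun _ _ => Nat.zero_le _) hv)) (Nat.cast_nonneg _)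
  have hsum : ∑ v ∈ T.nChildrenFinset m u, x v ≤ 1 := by
    rw [← Finset.sum_div, ← Nat.cast_sum, ← numNChildren_add]
    exact div_self_le_one _
  calc ∑ v ∈ T.nChildrenFinset m u, ‖T.B^[a] (T.spread (m + a) g) v‖ ^ p
      = ∑ v ∈ T.nChildrenFinset m u, x v ^ p * ‖g u‖ ^ p := by
        refine Finset.sum_congr rfl fun v hv => ?_
        rw [B_iterate_spread_of_mem hv, ← Real.mul_rpow (by positivity) (norm_nonneg _)]
        simp [x, mul_div_assoc', div_mul_eq_mul_div]
    _ ≤ ∑ v ∈ T.nChildrenFinset m u, x v * ‖g u‖ ^ p := by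
        gcongr with v hv
        exact Real.rpow_le_self_of_le_one (by positivity) (hx v hv) hp
    _ ≤ ‖g u‖ ^ p := by
        rw [← Finset.sum_mul]
        exact mul_le_of_le_one_left (by positivity) hsum

lemma Mp_B_iterate_spread_le (hleaf : ∀ v : T.V, T.numChildren v ≠ 0) (hp : 1 ≤ p)
    {a b : ℕ} (hab : a ≤ b) {g : T.V → ℂ} {C : ℝ}
    (hC : ∀ n, ∑ v ∈ T.levelFinset n, ‖g v‖ ^ p ≤ C) (r : ℕ) :
    T.Mp p (T.B^[a] (T.spread b g)) r ≤ (C / T.gamma (b - a)) ^ (1 / p) := by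
  have hC0 : 0 ≤ C := le_trans (by positivity) (hC 0)
  refine Real.rpow_le_rpow (Mpp_nonneg _ r) ?_ (by positivity)
  rcases lt_or_ge (r + a) b with hr | hr
  · rw [Mpp_eq_zero (by linarith) fun v hv =>
      B_iterate_apply_eq_zero fun w hw => spread_eq_zero_of_lt (by omega)]
    positivity
  · obtain ⟨s, rfl⟩ : ∃ s, r = s + (b - a) := ⟨r - (b - a), by omega⟩
    have hsum := sum_norm_B_iterate_spread_rpow_le hp s (b - a) a g
    rw [Nat.sub_add_cancel hab] at hsum
    calc T.Mpp p (T.B^[a] (T.spread b g)) (s + (b - a))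
        = (∑ v ∈ T.levelFinset (s + (b - a)), ‖T.B^[a] (T.spread b g) v‖ ^ p)
            / T.gamma (s + (b - a)) := one_div_mul_eq_div _ _
      _ ≤ C / T.gamma (s + (b - a)) := by gcongr; exact hsum.trans (hC s)
      _ ≤ C / T.gamma (b - a) := div_le_div_of_nonneg_left hC0
          (Nat.cast_pos.2 (gamma_pos _))
          (Nat.cast_le.2 (gamma_mono hleaf (Nat.le_add_left _ _)))

lemma exists_Mp_B_iterate_spread_le (hleaf : ∀ v : T.V, T.numChildren v ≠ 0) (hp : 1 ≤ p)
    (hγ : Filter.Tendsto T.gamma Filter.atTop Filter.atTop) {d : ℕ} {g : T.V → ℂ}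
    (hg : T.VanishesAbove d g) {ε : ℝ} (hε : 0 < ε) :
    ∃ M, ∀ a b, a + M ≤ b → ∀ r, T.Mp p (T.B^[a] (T.spread b g)) r ≤ ε := by
  have hp0 : 0 < p := by linarith
  obtain ⟨C, hC⟩ := exists_sum_norm_rpow_le hp0 hg
  have hlim : Filter.Tendsto (fun m => C / T.gamma m) Filter.atTop (nhds 0) :=
    tendsto_const_nhds.div_atTop (tendsto_natCast_atTop_atTop.comp hγ)
  obtain ⟨M, hM⟩ :=
    Filter.eventually_atTop.1 (hlim.eventually_le_const (by positivity : 0 < ε ^ p))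
  refine ⟨M, fun a b hab r => ?_⟩
  calc T.Mp p (T.B^[a] (T.spread b g)) r ≤ (C / T.gamma (b - a)) ^ (1 / p) :=
        Mp_B_iterate_spread_le hleaf hp (by omega) hC r
    _ ≤ (ε ^ p) ^ (1 / p) := by
        have hC0 : 0 ≤ C := le_trans (by positivity) (hC 0)
        gcongr
        exact hM _ (by omega)
    _ = ε := by rw [one_div, Real.rpow_rpow_inv hε.le hp0.ne']

variable (T) in
/-- `Σ_i T_{n_i} g_i`; for strictly increasing `n` the terms with `i > |v|` vanish at `v`. -/
noncomputable def spreadSeries (n : ℕ → ℕ) (g : ℕ → T.V → ℂ) : T.V → ℂ := fun v =>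
  ∑ i ∈ Finset.range (T.level v + 1), T.spread (n i) (g i) v

variable {n d : ℕ → ℕ} {g : ℕ → T.V → ℂ}

lemma B_iterate_spreadSeries (a : ℕ) (v : T.V) :
    T.B^[a] (T.spreadSeries n g) v
      = ∑ i ∈ Finset.range (T.level v + a + 1), T.B^[a] (T.spread (n i) (g i)) v := by
  simp only [B_iterate_apply]
  rw [Finset.sum_comm]
  refine Finset.sum_congr rfl fun w hw => ?_
  rw [spreadSeries, (mem_nChildrenFinset.1 hw).1]

lemma Mp_B_iterate_spreadSeries_sub_le (hp : 1 ≤ p) (hg : ∀ i, T.VanishesAbove (d i) (g i))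
    (hn : ∀ j k, j < k → n j + d j < n k) {k a r : ℕ} (hr : n k ≤ r + a)
    (hsmall : ∀ i, k < i → T.Mp p (T.B^[a] (T.spread (n i) (g i))) r ≤ (1 / 2) ^ i) :
    T.Mp p (T.B^[a] (T.spreadSeries n g) - T.B^[a] (T.spread (n k) (g k))) r
      ≤ (1 / 2) ^ k := by
  have hk : k ≤ n k :=
    StrictMono.id_le (fun j k h => lt_of_le_of_lt (Nat.le_add_right _ _) (hn j k h)) k
  have htail : ∀ v, T.level v = r →
      (T.B^[a] (T.spreadSeries n g) - T.B^[a] (T.spread (n k) (g k))) v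
        = (∑ i ∈ Finset.Ico (k + 1) (r + a + 1), T.B^[a] (T.spread (n i) (g i))) v := by
    intro v hv
    have hlow : ∀ i < k, T.B^[a] (T.spread (n i) (g i)) v = 0 := fun i hi =>
      B_iterate_apply_eq_zero fun w hw =>
        spread_eq_zero_of_vanishesAbove (hg i) (by have := hn i k hi; omega)
    rw [Pi.sub_apply, B_iterate_spreadSeries, hv,
      Finset.sum_range_eq_add_sum_Ico (by omega) hlow, add_sub_cancel_left, Finset.sum_apply]
  calc _ = T.Mp p (∑ i ∈ Finset.Ico (k + 1) (r + a + 1), T.B^[a] (T.spread (n i) (g i))) r :=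
        Mp_congr htail
    _ ≤ ∑ i ∈ Finset.Ico (k + 1) (r + a + 1), T.Mp p (T.B^[a] (T.spread (n i) (g i))) r :=
        Mp_sum_le hp _ _ r
    _ ≤ ∑ i ∈ Finset.Ico (k + 1) (r + a + 1), (1 / 2 : ℝ) ^ i :=
        Finset.sum_le_sum fun i hi => hsmall i (Finset.mem_Ico.1 hi).1
    _ ≤ (1 / 2) ^ (k + 1) / (1 - 1 / 2) :=
        geom_sum_Ico_le_of_lt_one (by norm_num) (by norm_num)
    _ = (1 / 2) ^ k := by ring

lemma memHp0_spreadSeries (hp : 1 ≤ p) (hg : ∀ i, T.VanishesAbove (d i) (g i))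
    (hn : ∀ j k, j < k → n j + d j < n k)
    (hsmall : ∀ i r, T.Mp p (T.spread (n i) (g i)) r ≤ (1 / 2) ^ i) :
    T.MemHp0 p (T.spreadSeries n g) := by
  rw [MemHp0, Metric.tendsto_atTop]
  intro ε hε
  obtain ⟨k, hk⟩ := exists_pow_lt_of_lt_one (half_pos hε) one_half_lt_one
  refine ⟨n k, fun r hr => ?_⟩
  have hbound : T.Mp p (T.spreadSeries n g) r ≤ (1 / 2) ^ k + (1 / 2) ^ k :=
    (Mp_le_Mp_sub_add hp _ (T.spread (n k) (g k)) r).trans <| add_le_add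
      (Mp_B_iterate_spreadSeries_sub_le (a := 0) hp hg hn hr fun i _ => hsmall i r) (hsmall k r)
  rw [Real.dist_eq, sub_zero, abs_of_nonneg (Mp_nonneg _ _)]
  linarith

instance finite_level_le (d : ℕ) : Finite {v : T.V // T.level v ≤ d} :=
  ((Set.finite_Iic d).preimage' fun n _ => T.finite_level n).to_subtype

variable (T) in
/-- Countably many finitely supported functions, with values in the dense sequence of `ℂ`;
they are dense in `H^p_0(T)`. -/
noncomputable def approxFn (x : Σ d : ℕ, {v : T.V // T.level v ≤ d} → ℕ) :
    T.V → ℂ := fun v =>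
  if h : T.level v ≤ x.1 then TopologicalSpace.denseSeq ℂ (x.2 ⟨v, h⟩) else 0

lemma vanishesAbove_approxFn (x : Σ d : ℕ, {v : T.V // T.level v ≤ d} → ℕ) :
    T.VanishesAbove x.1 (T.approxFn x) := fun _ hv => dif_neg (by omega)

lemma exists_approxFn_near (hp : 0 < p) {G : T.V → ℂ} (hG : T.MemHp0 p G) {ε : ℝ}
    (hε : 0 < ε) :
    ∃ x, ∀ r, T.Mp p (T.approxFn x - G) r ≤ ε := by
  obtain ⟨d, hd⟩ := Filter.eventually_atTop.1 (hG.eventually_le_const hε)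
  have hz : ∀ z : ℂ, ∃ i, dist z (TopologicalSpace.denseSeq ℂ i) < ε := fun z =>
    Metric.denseRange_iff.1 (TopologicalSpace.denseRange_denseSeq ℂ) z ε hε
  choose c hc using hz
  refine ⟨⟨d, fun v => c (G v)⟩, fun r => ?_⟩
  rcases le_or_gt r d with hr | hr
  · refine Mp_le_of_forall_norm_le hp hε.le fun v hv => ?_
    rw [Pi.sub_apply, approxFn, dif_pos (hv ▸ hr), ← dist_eq_norm, dist_comm]
    exact (hc _).le
  · calc T.Mp p (T.approxFn ⟨d, fun v => c (G v)⟩ - G) r = T.Mp p G r := by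
          unfold Mp Mpp
          congr 2
          refine Finset.sum_congr rfl fun v hv => ?_
          have : ¬ T.level v ≤ d := by rw [mem_levelFinset.1 hv]; omega
          rw [Pi.sub_apply, approxFn, dif_neg this, zero_sub, norm_neg]
      _ ≤ ε := hd r hr.le

theorem hypercyclic_B_of_tendsto_gamma (hp : 1 ≤ p) (hleaf : ∀ v : T.V, T.numChildren v ≠ 0)
    (hγ : Filter.Tendsto T.gamma Filter.atTop Filter.atTop) :
    T.Hypercyclic T.B (T.MemHp0 p) p := by
  obtain ⟨e, he⟩ := exists_surjective_nat (Σ d : ℕ, {v : T.V // T.level v ≤ d} → ℕ)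
  -- `x` takes every value at arbitrarily large indices.
  set x : ℕ → Σ d : ℕ, {v : T.V // T.level v ≤ d} → ℕ := fun k => e k.unpair.1
  have hg : ∀ k, T.VanishesAbove (x k).1 (T.approxFn (x k)) := fun k => vanishesAbove_approxFn _
  choose M hM using fun k =>
    exists_Mp_B_iterate_spread_le hleaf hp hγ (hg k) (pow_pos (one_half_pos (α := ℝ)) k)
  obtain ⟨n, hMn, hn⟩ := exists_seq_gaps M fun k => (x k).1
  refine ⟨T.spreadSeries n fun k => T.approxFn (x k),
    memHp0_spreadSeries hp hg (fun j k h => (hn j k h).1)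
      fun i r => hM i 0 (n i) (by simpa using hMn i) r, fun G hG ε hε => ?_⟩
  obtain ⟨y, hy⟩ := exists_approxFn_near (by linarith) hG (half_pos hε)
  obtain ⟨j, rfl⟩ := he y
  obtain ⟨t, ht⟩ := exists_pow_lt_of_lt_one (half_pos hε) one_half_lt_one
  set k := Nat.pair j t
  have hxk : x k = e j := by simp [x, k]
  refine ⟨n k, (ciSup_le fun r => ?_).trans_lt (by linarith : (1 / 2 : ℝ) ^ t + ε / 2 < ε)⟩
  have hBk := Mp_B_iterate_spreadSeries_sub_le (k := k) (r := r) hp hg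
    (fun j k h => (hn j k h).1) (Nat.le_add_left _ _) fun i hki => hM i (n k) (n i) (hn k i hki).2 r
  rw [B_iterate_spread hleaf] at hBk
  calc _ ≤ T.Mp p (T.B^[n k] (T.spreadSeries n fun k => T.approxFn (x k)) - T.approxFn (x k)) r
          + T.Mp p (T.approxFn (x k) - G) r := Mp_sub_le_add hp _ _ _ r
    _ ≤ (1 / 2) ^ k + ε / 2 := add_le_add hBk (hxk ▸ hy r)
    _ ≤ (1 / 2) ^ t + ε / 2 := add_le_add_left
        (pow_le_pow_of_le_one (by norm_num) (by norm_num) (Nat.right_le_pair j t)) _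

lemma norm_B_iterate_apply_le (hp : 0 < p) {b C : ℝ} (hb : ∀ n, (T.gamma n : ℝ) ≤ b)
    {f : T.V → ℂ} (hC : ∀ n, T.Mp p f n ≤ C) (N : ℕ) (v : T.V) :
    ‖T.B^[N] f v‖ ≤ b * (b ^ (1 / p) * C) := by
  set n := T.level v + N
  have hnorm : ∀ w ∈ T.levelFinset n, ‖f w‖ ≤ (T.gamma n : ℝ) ^ (1 / p) * T.Mp p f n :=
    fun w hw => mem_levelFinset.1 hw ▸ norm_le_Mp hp f
  have := Mp_nonneg (p := p) f n
  have hb0 : 0 ≤ b := (Nat.cast_nonneg _).trans (hb 0)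
  calc ‖T.B^[N] f v‖ ≤ ∑ w ∈ T.nChildrenFinset N v, ‖f w‖ := by
        rw [B_iterate_apply]; exact norm_sum_le _ _
    _ ≤ ∑ w ∈ T.levelFinset n, ‖f w‖ :=
        Finset.sum_le_sum_of_subset_of_nonneg (nChildrenFinset_subset_levelFinset N v)
          fun _ _ _ => norm_nonneg _
    _ ≤ T.gamma n * ((T.gamma n : ℝ) ^ (1 / p) * T.Mp p f n) := by
        rw [gamma, ← nsmul_eq_mul]
        exact Finset.sum_le_card_nsmul _ _ _ hnorm
    _ ≤ b * (b ^ (1 / p) * C) := by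
        gcongr
        exacts [hb n, hb n, hC n]

/-- If `γ ≤ b`, every `B^N f` is bounded by a constant depending only on `f`, so no orbit
can approach a function with a large value at the root. -/
theorem tendsto_gamma_of_hypercyclic (hp : 0 < p) (hleaf : ∀ v : T.V, T.numChildren v ≠ 0)
    (h : T.Hypercyclic T.B (T.MemHp0 p) p) :
    Filter.Tendsto T.gamma Filter.atTop Filter.atTop := by
  by_contra hγ
  obtain ⟨b, hb⟩ : ∃ b : ℕ, ∀ n, T.gamma n < b := by
    simpa using (gamma_mono hleaf).tendsto_atTop_atTop_iff.not.1 hγ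
  obtain ⟨f, hf, hdense⟩ := h
  obtain ⟨C, hC⟩ := hf.bddAbove_range
  set K : ℝ := b * ((b : ℝ) ^ (1 / p) * C)
  have hK : ∀ N v, ‖T.B^[N] f v‖ ≤ K := norm_B_iterate_apply_le hp
    (fun n => Nat.cast_le.2 (hb n).le) (fun n => hC ⟨n, rfl⟩)
  have hK0 : 0 ≤ K := (norm_nonneg _).trans (hK 0 T.root)
  set c : ℂ := ((K + 1 : ℝ) : ℂ)
  have hc : ‖c‖ = K + 1 := by rw [Complex.norm_real, Real.norm_of_nonneg (by positivity)]
  set G : T.V → ℂ := fun v => if v = T.root then c else 0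
  have hG : ∀ v, ‖G v‖ ≤ K + 1 := fun v => by
    by_cases hv : v = T.root
    · simp [G, hv, hc]
    · simp only [G, if_neg hv, norm_zero]; positivity
  have hGmem : T.MemHp0 p G := memHp0_of_vanishesAbove hp (d := 0) fun v hv =>
    if_neg fun h => by rw [h, T.level_root] at hv; omega
  obtain ⟨N, hN⟩ := hdense G hGmem 1 one_pos
  have hbdd : BddAbove (Set.range fun r => T.Mp p (fun v => T.B^[N] f v - G v) r) :=
    ⟨K + (K + 1), Set.forall_mem_range.2 fun r => Mp_le_of_forall_norm_le hp (by positivity)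
      fun v _ => (norm_sub_le _ _).trans (add_le_add (hK N v) (hG v))⟩
  have hroot : 1 ≤ T.Mp p (fun v => T.B^[N] f v - G v) 0 := by
    have := norm_sub_norm_le (G T.root) (T.B^[N] f T.root)
    rw [Mp_level_zero hp.ne', norm_sub_rev]
    simp only [G, if_pos, hc] at this ⊢
    linarith [hK N T.root]
  exact (hroot.trans (le_ciSup hbdd 0)).not_gt hN

end HTree

theorem backward_shift_hypercyclic_iff_general (T : HTree) (p : ℝ) (hp : 1 ≤ p)
    (hleafless : ∀ v : T.V, T.numChildren v ≠ 0) :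
    T.Hypercyclic T.B (T.MemHp0 p) p ↔
      Filter.Tendsto (fun n : ℕ => T.gamma n) Filter.atTop Filter.atTop :=
  ⟨HTree.tendsto_gamma_of_hypercyclic (by linarith) hleafless,
    HTree.hypercyclic_B_of_tendsto_gamma hp hleafless⟩

/-- on a leafless tree, the backward shift is hypercyclic on `H^p_0(T)`
if and only if `γ(n) → ∞`. -/
theorem backward_shift_hypercyclic_iff (T : HTree) (p : ℝ) (hp : 1 ≤ p)
    (hleafless : ∀ v : T.V, T.numChildren v ≠ 0)
    (hb : T.BoundedOn T.B (T.MemHp0 p) p) :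
    T.Hypercyclic T.B (T.MemHp0 p) p ↔
      Filter.Tendsto (fun n : ℕ => T.gamma n) Filter.atTop Filter.atTop :=
  backward_shift_hypercyclic_iff_general T p hp hleafless
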